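/- arXiv:2212.05167 — 2 statements merged into one kernel-verified Lean document; each statement's English description precedes it below -/
import Mathlib

section
/- Let f : B → A and g : C → A be epimorphisms of finite graphs and let D be their standard amalgamation with projections f₀ : D → B and g₀ : D → C. If f is confluent, then g₀ is confluent. -/
/-- A (reflexive, symmetric) graph relation. -/
def IsGraph {V : Type*} (E : V → V → Prop) : Prop :=
  (∀ v, E v v) ∧ ∀ a b, E a b → E b a

/-- A subset `S` of the vertices of a graph is connected if it cannot be partitioned
into two nonempty sets with no edge between them. -/
def ConnSet {V : Type*} (E : V → V → Prop) (S : Set V) : Prop :=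
  ¬ ∃ P Q : Set V, P.Nonempty ∧ Q.Nonempty ∧ Disjoint P Q ∧ P ∪ Q = S ∧
      ∀ a ∈ P, ∀ b ∈ Q, ¬ E a b

/-- `C` is a (connected) component of `S`: a maximal connected subset of `S`. -/
def IsComponent {V : Type*} (E : V → V → Prop) (S C : Set V) : Prop :=
  C ⊆ S ∧ ConnSet E C ∧ ∀ C' : Set V, C ⊆ C' → C' ⊆ S → ConnSet E C' → C' = C

/-- An epimorphism of graphs: edge-preserving, surjective on vertices and on edges. -/
def IsEpi {V W : Type*} (EG : V → V → Prop) (EH : W → W → Prop) (f : V → W) : Prop :=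
  (∀ a b, EG a b → EH (f a) (f b)) ∧ Function.Surjective f ∧
    ∀ c d, EH c d → ∃ a b, EG a b ∧ f a = c ∧ f b = d

/-- A map is monotone if the preimage of every vertex is connected. -/
def IsMonotone {V W : Type*} (EG : V → V → Prop) (f : V → W) : Prop :=
  ∀ y : W, ConnSet EG (f ⁻¹' {y})

/-- A map is light if no edge joins two distinct points of a fiber. -/
def IsLight {V W : Type*} (EG : V → V → Prop) (f : V → W) : Prop :=
  ∀ a b : V, f a = f b → a ≠ b → ¬ EG a b

/-- Confluence: every component of the preimage of a connected set maps onto that set. -/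
def IsConfluent {V W : Type*} (EG : V → V → Prop) (EH : W → W → Prop) (f : V → W) : Prop :=
  ∀ Q : Set W, ConnSet EH Q → ∀ C : Set V, IsComponent EG (f ⁻¹' Q) C → f '' C = Q

/-- `l` is a (simple) path from `a` to `b` in the graph. -/
def IsPathList {V : Type*} (E : V → V → Prop) (a b : V) (l : List V) : Prop :=
  l.Nodup ∧ l.Chain' E ∧ l.head? = some a ∧ l.getLast? = some b

/-- A finite graph is a tree if any two distinct vertices are joined by a unique path. -/
def IsTreeRel {V : Type*} (E : V → V → Prop) : Prop :=
  ∀ a b : V, a ≠ b → ∃! l : List V, IsPathList E a b l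

/-- Vertices of the standard amalgamation of `f : B → A` and `g : C → A`. -/
abbrev AmalgV {A B C : Type*} (f : B → A) (g : C → A) : Type _ :=
  {p : B × C // f p.1 = g p.2}

/-- Edges of the standard amalgamation. -/
def AmalgE {A B C : Type*} (EB : B → B → Prop) (EC : C → C → Prop)
    (f : B → A) (g : C → A) : AmalgV f g → AmalgV f g → Prop :=
  fun p q => EB p.1.1 q.1.1 ∧ EC p.1.2 q.1.2

/-- First coordinate projection of the standard amalgamation. -/
def amalgFst {A B C : Type*} (f : B → A) (g : C → A) : AmalgV f g → B :=
  fun p => p.1.1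

/-- Second coordinate projection of the standard amalgamation. -/
def amalgSnd {A B C : Type*} (f : B → A) (g : C → A) : AmalgV f g → C :=
  fun p => p.1.2


/-!
Let `K` be a nonempty component of `g₀⁻¹(Q)`. If `g₀(K) ≠ Q`, connectedness of `Q` gives an edge
`c₀ c₁` of `C` with `c₀ ∈ g₀(K)` and `c₁ ∈ Q \ g₀(K)`; pick `(b₀, c₀) ∈ K`. The edge `g c₀ g c₁`
is connected in `A`, so by confluence of `f` the component `M` of `f⁻¹{g c₀, g c₁}` through `b₀`
reaches the fibre of `g c₁`. The part of `D` lying over `M × {c₀, c₁}` is connected, meets `K`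
and lies in `g₀⁻¹(Q)`, so maximality of `K` puts a point over `c₁` into `K`: a contradiction.
-/

section ConnSet

variable {V : Type*} {E : V → V → Prop} {S T K N : Set V}

lemma connSet_singleton (E : V → V → Prop) (v : V) : ConnSet E {v} := by
  rintro ⟨P, Q, ⟨p, hp⟩, ⟨q, hq⟩, hd, hu, -⟩
  have hpv : p = v := (hu ▸ Or.inl hp : p ∈ ({v} : Set V))
  have hqv : q = v := (hu ▸ Or.inr hq : q ∈ ({v} : Set V))
  exact Set.disjoint_left.mp hd hp (hpv.trans hqv.symm ▸ hq)

lemma connSet_pair {a b : V} (hab : E a b) (hba : E b a) : ConnSet E {a, b} := by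
  rintro ⟨P, Q, ⟨p, hp⟩, ⟨q, hq⟩, hd, hu, hne⟩
  have hpq : p ≠ q := fun h => Set.disjoint_left.mp hd hp (h ▸ hq)
  have hp' : p = a ∨ p = b := (hu ▸ Or.inl hp : p ∈ ({a, b} : Set V))
  have hq' : q = a ∨ q = b := (hu ▸ Or.inr hq : q ∈ ({a, b} : Set V))
  rcases hp' with rfl | rfl <;> rcases hq' with rfl | rfl
  exacts [hpq rfl, hne _ hp _ hq hab, hne _ hp _ hq hba, hpq rfl]

lemma ConnSet.subset_or_subset (hS : ConnSet E S) {P Q : Set V} (hd : Disjoint P Q)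
    (hSPQ : S ⊆ P ∪ Q) (hne : ∀ a ∈ P, ∀ b ∈ Q, ¬ E a b) : S ⊆ P ∨ S ⊆ Q := by
  by_contra! h
  obtain ⟨⟨q, hqS, hqP⟩, ⟨p, hpS, hpQ⟩⟩ := And.imp Set.not_subset.mp Set.not_subset.mp h
  exact hS ⟨S ∩ P, S ∩ Q, ⟨p, hpS, (hSPQ hpS).resolve_right hpQ⟩,
    ⟨q, hqS, (hSPQ hqS).resolve_left hqP⟩,
    hd.mono Set.inter_subset_right Set.inter_subset_right,
    by rw [← Set.inter_union_distrib_left, Set.inter_eq_left.mpr hSPQ],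
    fun a ha b hb => hne a ha.2 b hb.2⟩

lemma ConnSet.union (hS : ConnSet E S) (hT : ConnSet E T) (hST : (S ∩ T).Nonempty) :
    ConnSet E (S ∪ T) := by
  rintro ⟨P, Q, ⟨p, hp⟩, ⟨q, hq⟩, hd, hu, hne⟩
  obtain ⟨x, hxS, hxT⟩ := hST
  have hSPQ : S ⊆ P ∪ Q := hu ▸ Set.subset_union_left
  have hTPQ : T ⊆ P ∪ Q := hu ▸ Set.subset_union_right
  rcases hSPQ hxS with hxP | hxQ
  · have hSP := (hS.subset_or_subset hd hSPQ hne).resolve_right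
      fun h => Set.disjoint_left.mp hd hxP (h hxS)
    have hTP := (hT.subset_or_subset hd hTPQ hne).resolve_right
      fun h => Set.disjoint_left.mp hd hxP (h hxT)
    exact Set.disjoint_left.mp hd (Set.union_subset hSP hTP (hu ▸ Or.inr hq)) hq
  · have hSQ := (hS.subset_or_subset hd hSPQ hne).resolve_left
      fun h => Set.disjoint_left.mp hd (h hxS) hxQ
    have hTQ := (hT.subset_or_subset hd hTPQ hne).resolve_left
      fun h => Set.disjoint_left.mp hd (h hxT) hxQ
    exact Set.disjoint_left.mp hd hp (Set.union_subset hSQ hTQ (hu ▸ Or.inl hp))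

lemma ConnSet.exists_edge_of_ssubset (hS : ConnSet E S) (hT : T.Nonempty) (hTS : T ⊂ S) :
    ∃ a ∈ T, ∃ b ∈ S \ T, E a b := by
  by_contra! h
  exact hS ⟨T, S \ T, hT, Set.nonempty_of_ssubset hTS, Set.disjoint_sdiff_right,
    Set.union_sdiff_cancel hTS.subset, h⟩

lemma exists_isComponent_mem [Finite V] (E : V → V → Prop) {v : V} (hv : v ∈ S) :
    ∃ M, IsComponent E S M ∧ v ∈ M := by
  obtain ⟨M, ⟨hMS, hM, hvM⟩, hmax⟩ :=
    (Set.toFinite {T : Set V | T ⊆ S ∧ ConnSet E T ∧ v ∈ T}).exists_maximal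
      ⟨{v}, Set.singleton_subset_iff.mpr hv, connSet_singleton E v, rfl⟩
  refine ⟨M, ⟨hMS, hM, fun M' hMM' hM'S hM' => ?_⟩, hvM⟩
  exact (hmax ⟨hM'S, hM', hMM' hvM⟩ hMM').antisymm hMM'

lemma IsComponent.eq_empty_of_empty (h : IsComponent E S ∅) : S = ∅ :=
  Set.eq_empty_of_forall_notMem fun v hv => Set.singleton_ne_empty v <|
    h.2.2 {v} (Set.empty_subset _) (Set.singleton_subset_iff.mpr hv) (connSet_singleton E v)

lemma IsComponent.subset_of_connSet (hK : IsComponent E S K) (hN : ConnSet E N) (hNS : N ⊆ S)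
    (hKN : (K ∩ N).Nonempty) : N ⊆ K :=
  Set.union_eq_left.mp <|
    hK.2.2 (K ∪ N) Set.subset_union_left (Set.union_subset hK.1 hNS) (hK.2.1.union hN hKN)

end ConnSet

section Amalgamation

variable {A B C : Type*} {EA : A → A → Prop} {EB : B → B → Prop} {EC : C → C → Prop}
  {f : B → A} {g : C → A}

lemma amalgSnd_surjective (hf : Function.Surjective f) : Function.Surjective (amalgSnd f g) :=
  fun c => ⟨⟨((hf (g c)).choose, c), (hf (g c)).choose_spec⟩, rfl⟩

lemma connSet_amalg (hB : ∀ b, EB b b) {M : Set B} {T : Set C} (hM : ConnSet EB M)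
    (hT : ∀ y ∈ T, ∀ y' ∈ T, EC y y') (hcov : ∀ x ∈ M, ∃ y ∈ T, f x = g y) :
    ConnSet (AmalgE EB EC f g) {p | amalgFst f g p ∈ M ∧ amalgSnd f g p ∈ T} := by
  rintro ⟨P, Q, hP, hQ, hd, hu, hne⟩
  have hmem : ∀ r ∈ P ∪ Q, amalgFst f g r ∈ M ∧ amalgSnd f g r ∈ T :=
    fun r hr => (hu ▸ hr : r ∈ {p | amalgFst f g p ∈ M ∧ amalgSnd f g p ∈ T})
  have hno : ∀ r ∈ P, ∀ s ∈ Q, ¬ EB (amalgFst f g r) (amalgFst f g s) := fun r hr s hs hrs =>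
    hne r hr s hs ⟨hrs, hT _ (hmem r (Or.inl hr)).2 _ (hmem s (Or.inr hs)).2⟩
  refine hM ⟨amalgFst f g '' P, amalgFst f g '' Q, hP.image _, hQ.image _, ?_, ?_, ?_⟩
  · refine Set.disjoint_left.mpr ?_
    rintro _ ⟨r, hr, rfl⟩ ⟨s, hs, hrs⟩
    exact hno r hr s hs (hrs ▸ hB _)
  · refine (Set.image_union _ P Q).symm.trans (Set.Subset.antisymm ?_ fun x hx => ?_)
    · rintro _ ⟨r, hr, rfl⟩
      exact (hmem r hr).1
    · obtain ⟨y, hy, hxy⟩ := hcov x hx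
      exact ⟨⟨(x, y), hxy⟩, hu.symm ▸ ⟨hx, hy⟩, rfl⟩
  · rintro _ ⟨r, hr, rfl⟩ _ ⟨s, hs, rfl⟩
    exact hno r hr s hs

lemma exists_connSet_amalg_of_edge [Finite B] (hB : ∀ b, EB b b) (hC : IsGraph EC)
    (hg : ∀ c c', EC c c' → EA (g c) (g c')) (hconf : IsConfluent EB EA f)
    {c₀ c₁ : C} (hc : EC c₀ c₁) (p₀ : AmalgV f g) (hp₀ : amalgSnd f g p₀ = c₀) :
    ∃ N, ConnSet (AmalgE EB EC f g) N ∧ amalgSnd f g '' N = {c₀, c₁} ∧ p₀ ∈ N := by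
  have hb₀ : f (amalgFst f g p₀) ∈ ({g c₀, g c₁} : Set A) := Or.inl (hp₀ ▸ p₀.2)
  obtain ⟨M, hM, hb₀M⟩ := exists_isComponent_mem EB (S := f ⁻¹' {g c₀, g c₁}) hb₀
  have hfM : f '' M = {g c₀, g c₁} :=
    hconf _ (connSet_pair (hg _ _ hc) (hg _ _ (hC.2 _ _ hc))) M hM
  obtain ⟨b₁, hb₁M, hb₁⟩ : g c₁ ∈ f '' M := hfM ▸ Or.inr rfl
  have hT : ∀ y ∈ ({c₀, c₁} : Set C), ∀ y' ∈ ({c₀, c₁} : Set C), EC y y' := by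
    rintro y (rfl | rfl) y' (rfl | rfl)
    exacts [hC.1 _, hc, hC.2 _ _ hc, hC.1 _]
  have hcov : ∀ x ∈ M, ∃ y ∈ ({c₀, c₁} : Set C), f x = g y := by
    intro x hx
    rcases hM.1 hx with h | h
    exacts [⟨c₀, Or.inl rfl, h⟩, ⟨c₁, Or.inr rfl, h⟩]
  refine ⟨_, connSet_amalg hB hM.2.1 hT hcov, Set.Subset.antisymm ?_ ?_, hb₀M, Or.inl hp₀⟩
  · rintro _ ⟨p, hp, rfl⟩
    exact hp.2
  · exact Set.pair_subset ⟨p₀, ⟨hb₀M, Or.inl hp₀⟩, hp₀⟩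
      ⟨⟨(b₁, c₁), hb₁⟩, ⟨hb₁M, Or.inr rfl⟩, rfl⟩

end Amalgamation

theorem statement9_general {A B C : Type*} [Fintype B]
    (EA : A → A → Prop) (EB : B → B → Prop) (EC : C → C → Prop)
    (hB : IsGraph EB) (hC : IsGraph EC)
    (f : B → A) (g : C → A)
    (hf : IsEpi EB EA f) (hg : IsEpi EC EA g)
    (hconf : IsConfluent EB EA f) :
    IsConfluent (AmalgE EB EC f g) EC (amalgSnd f g) := by
  intro Q hQ K hK
  obtain rfl | hKne := K.eq_empty_or_nonempty
  · rw [Set.image_empty, eq_comm]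
    exact (amalgSnd_surjective hf.2.1).preimage_injective
      (hK.eq_empty_of_empty.trans Set.preimage_empty.symm)
  have hsub : amalgSnd f g '' K ⊆ Q := Set.image_subset_iff.mpr hK.1
  by_contra hne
  obtain ⟨_, ⟨p₀, hp₀K, rfl⟩, c₁, ⟨hc₁Q, hc₁K⟩, hc⟩ :=
    hQ.exists_edge_of_ssubset (hKne.image _) (Set.ssubset_iff_subset_ne.mpr ⟨hsub, hne⟩)
  obtain ⟨N, hN, hNim, hp₀N⟩ := exists_connSet_amalg_of_edge hB.1 hC hg.1 hconf hc p₀ rfl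
  have hNQ : N ⊆ amalgSnd f g ⁻¹' Q :=
    Set.image_subset_iff.mp (hNim ▸ Set.pair_subset (hsub ⟨p₀, hp₀K, rfl⟩) hc₁Q)
  have hNK : N ⊆ K := hK.subset_of_connSet hN hNQ ⟨p₀, hp₀K, hp₀N⟩
  exact hc₁K (Set.image_mono hNK (hNim ▸ Or.inr rfl))

/-- In the standard amalgamation, if `f` is confluent then `g₀` is confluent. -/
theorem statement9 {A B C : Type*} [Fintype A] [Fintype B] [Fintype C]
    (EA : A → A → Prop) (EB : B → B → Prop) (EC : C → C → Prop)
    (hA : IsGraph EA) (hB : IsGraph EB) (hC : IsGraph EC)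
    (f : B → A) (g : C → A)
    (hf : IsEpi EB EA f) (hg : IsEpi EC EA g)
    (hconf : IsConfluent EB EA f) :
    IsConfluent (AmalgE EB EC f g) EC (amalgSnd f g) :=
  statement9_general EA EB EC hB hC f g hf hg hconf
end

section
/- Let f : F → G and g : G → H be epimorphisms between topological graphs. If the composition g ∘ f : F → H is confluent, then g is confluent. -/
/-- A subset `S` of the vertices of a topological graph is connected if it cannot be
partitioned into two nonempty relatively closed sets with no edge between them. -/
def TConnSet {V : Type*} [TopologicalSpace V] (E : V → V → Prop) (S : Set V) : Prop :=
  ¬ ∃ P Q : Set V, P.Nonempty ∧ Q.Nonempty ∧ Disjoint P Q ∧ P ∪ Q = S ∧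
      IsClosed {x : S | (x : V) ∈ P} ∧ IsClosed {x : S | (x : V) ∈ Q} ∧
      ∀ a ∈ P, ∀ b ∈ Q, ¬ E a b

/-- A topological graph structure: a closed, reflexive, symmetric edge relation. -/
def IsTopGraph {V : Type*} [TopologicalSpace V] (E : V → V → Prop) : Prop :=
  (∀ v, E v v) ∧ (∀ a b, E a b → E b a) ∧ IsClosed {p : V × V | E p.1 p.2}

/-- An epimorphism of topological graphs: continuous, edge-preserving, surjective on
vertices and on edges. -/
def IsTopEpi {V W : Type*} [TopologicalSpace V] [TopologicalSpace W]
    (EG : V → V → Prop) (EH : W → W → Prop) (f : V → W) : Prop :=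
  Continuous f ∧ (∀ a b, EG a b → EH (f a) (f b)) ∧ Function.Surjective f ∧
    ∀ c d, EH c d → ∃ a b, EG a b ∧ f a = c ∧ f b = d

/-- `C` is a component of `S`: a maximal connected subset of `S`. -/
def TIsComponent {V : Type*} [TopologicalSpace V] (E : V → V → Prop)
    (S C : Set V) : Prop :=
  C ⊆ S ∧ TConnSet E C ∧ ∀ C' : Set V, C ⊆ C' → C' ⊆ S → TConnSet E C' → C' = C

/-- Confluence for maps of topological graphs: every component of the preimage of a
closed connected set maps onto that set. -/
def TConfluent {V W : Type*} [TopologicalSpace V] [TopologicalSpace W]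
    (EG : V → V → Prop) (EH : W → W → Prop) (f : V → W) : Prop :=
  ∀ Q : Set W, IsClosed Q → TConnSet EH Q →
    ∀ C : Set V, TIsComponent EG (f ⁻¹' Q) C → f '' C = Q

/-!
A component `C` of `g⁻¹(Q)` contains some `f(a)`; the component `D` of `(g ∘ f)⁻¹(Q)` through
`a` maps onto `Q` by confluence of `g ∘ f`, and `f(D)` is a connected subset of `g⁻¹(Q)` meeting
`C`, hence lies in `C` by maximality. So `g(C) ⊇ g(f(D)) = Q`.
-/

open Set

section TopGraph

variable {V W : Type*} [TopologicalSpace V] [TopologicalSpace W]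

lemma isClosed_subtype_preimage_inter {u : V → W} (hu : Continuous u) {T : Set V}
    {S P : Set W} (hTS : MapsTo u T S) (hP : IsClosed {y : S | (y : W) ∈ P}) :
    IsClosed {x : T | (x : V) ∈ u ⁻¹' P ∩ T} := by
  convert hP.preimage (hu.restrict hTS) using 1
  ext x
  simp

lemma TConnSet.singleton (E : V → V → Prop) (x : V) : TConnSet E {x} := by
  rintro ⟨P, Q, ⟨p, hp⟩, ⟨q, hq⟩, hdisj, hun, -, -, -⟩
  have hpx : p = x := eq_of_mem_singleton (hun ▸ mem_union_left Q hp)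
  have hqx : q = x := eq_of_mem_singleton (hun ▸ mem_union_right P hq)
  exact disjoint_left.1 hdisj hp (hpx.trans hqx.symm ▸ hq)

lemma TConnSet.subset_or_subset {E : V → V → Prop} {S P Q T : Set V}
    (hT : TConnSet E T) (hTS : T ⊆ S) (hdisj : Disjoint P Q) (hun : P ∪ Q = S)
    (hP : IsClosed {x : S | (x : V) ∈ P}) (hQ : IsClosed {x : S | (x : V) ∈ Q})
    (hE : ∀ a ∈ P, ∀ b ∈ Q, ¬ E a b) : T ⊆ P ∨ T ⊆ Q := by
  by_contra! h
  obtain ⟨p, hpT, hpP⟩ := not_subset.1 h.2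
  obtain ⟨q, hqT, hqQ⟩ := not_subset.1 h.1
  have hpP : p ∈ P := (hun ▸ hTS hpT : p ∈ P ∪ Q).resolve_right hpP
  have hqQ : q ∈ Q := (hun ▸ hTS hqT : q ∈ P ∪ Q).resolve_left hqQ
  refine hT ⟨P ∩ T, Q ∩ T, ⟨p, hpP, hpT⟩, ⟨q, hqQ, hqT⟩,
    hdisj.mono inter_subset_left inter_subset_left, ?_,
    isClosed_subtype_preimage_inter continuous_id hTS hP,
    isClosed_subtype_preimage_inter continuous_id hTS hQ,
    fun a ha b hb => hE a ha.1 b hb.1⟩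
  rw [← union_inter_distrib_right, hun, inter_eq_right.2 hTS]

lemma TConnSet.sUnion {E : V → V → Prop} {𝒯 : Set (Set V)} {x : V}
    (h𝒯 : ∀ T ∈ 𝒯, x ∈ T ∧ TConnSet E T) : TConnSet E (⋃₀ 𝒯) := by
  rintro ⟨P, Q, ⟨p, hp⟩, ⟨q, hq⟩, hdisj, hun, hPc, hQc, hE⟩
  have hside : ∀ T ∈ 𝒯, T ⊆ P ∨ T ⊆ Q := fun T hT =>
    (h𝒯 T hT).2.subset_or_subset (subset_sUnion_of_mem hT) hdisj hun hPc hQc hE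
  -- every member of `𝒯` contains `x`, so the one through `p` and the one through `q` force
  -- `x` into both sides
  have hxP : x ∈ P := by
    obtain ⟨T, hT, hpT⟩ : p ∈ ⋃₀ 𝒯 := hun ▸ mem_union_left Q hp
    refine (hside T hT).elim (fun h => h (h𝒯 T hT).1) fun h => ?_
    exact absurd (h hpT) (disjoint_left.1 hdisj hp)
  have hxQ : x ∈ Q := by
    obtain ⟨T, hT, hqT⟩ : q ∈ ⋃₀ 𝒯 := hun ▸ mem_union_right P hq
    refine (hside T hT).elim (fun h => ?_) fun h => h (h𝒯 T hT).1
    exact absurd hq (disjoint_left.1 hdisj (h hqT))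
  exact disjoint_left.1 hdisj hxP hxQ

lemma TConnSet.union {E : V → V → Prop} {T₁ T₂ : Set V} {x : V}
    (h₁ : TConnSet E T₁) (h₂ : TConnSet E T₂) (hx₁ : x ∈ T₁) (hx₂ : x ∈ T₂) :
    TConnSet E (T₁ ∪ T₂) := by
  rw [← sUnion_pair]
  refine TConnSet.sUnion (x := x) fun T hT => ?_
  rcases hT with rfl | rfl
  exacts [⟨hx₁, h₁⟩, ⟨hx₂, h₂⟩]

lemma TConnSet.image {EV : V → V → Prop} {EW : W → W → Prop} {f : V → W} {D : Set V}
    (hD : TConnSet EV D) (hf : Continuous f) (hfE : ∀ a b, EV a b → EW (f a) (f b)) :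
    TConnSet EW (f '' D) := by
  rintro ⟨P, Q, ⟨p, hp⟩, ⟨q, hq⟩, hdisj, hun, hPc, hQc, hE⟩
  obtain ⟨a, ha, rfl⟩ : p ∈ f '' D := hun ▸ mem_union_left Q hp
  obtain ⟨b, hb, rfl⟩ : q ∈ f '' D := hun ▸ mem_union_right P hq
  refine hD ⟨f ⁻¹' P ∩ D, f ⁻¹' Q ∩ D, ⟨a, hp, ha⟩, ⟨b, hq, hb⟩,
    (hdisj.preimage f).mono inter_subset_left inter_subset_left, ?_,
    isClosed_subtype_preimage_inter hf (mapsTo_image f D) hPc,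
    isClosed_subtype_preimage_inter hf (mapsTo_image f D) hQc,
    fun a ha b hb hab => hE _ ha.1 _ hb.1 (hfE a b hab)⟩
  rw [← union_inter_distrib_right, ← preimage_union, hun,
    inter_eq_right.2 (subset_preimage_image f D)]

lemma TIsComponent.nonempty {E : V → V → Prop} {S C : Set V} (hC : TIsComponent E S C)
    (hS : S.Nonempty) : C.Nonempty := by
  obtain ⟨s, hs⟩ := hS
  rw [nonempty_iff_ne_empty]
  rintro rfl
  exact singleton_ne_empty s
    (hC.2.2 {s} (empty_subset _) (singleton_subset_iff.2 hs) (TConnSet.singleton E s))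

lemma TIsComponent.subset_of_tConnSet {E : V → V → Prop} {S C T : Set V} {x : V}
    (hC : TIsComponent E S C) (hT : TConnSet E T) (hTS : T ⊆ S) (hxC : x ∈ C)
    (hxT : x ∈ T) : T ⊆ C :=
  union_eq_left.1 <|
    hC.2.2 _ subset_union_left (union_subset hC.1 hTS) (hC.2.1.union hT hxC hxT)

lemma exists_tIsComponent_mem (E : V → V → Prop) {S : Set V} {x : V} (hx : x ∈ S) :
    ∃ C, TIsComponent E S C ∧ x ∈ C := by
  set 𝒯 : Set (Set V) := {T | T ⊆ S ∧ x ∈ T ∧ TConnSet E T}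
  have hx𝒯 : x ∈ ⋃₀ 𝒯 :=
    subset_sUnion_of_mem (S := 𝒯) ⟨singleton_subset_iff.2 hx, rfl, TConnSet.singleton E x⟩ rfl
  refine ⟨⋃₀ 𝒯, ⟨sUnion_subset fun T hT => hT.1, TConnSet.sUnion fun T hT => hT.2, ?_⟩, hx𝒯⟩
  exact fun C' hC' hC'S hC'conn =>
    (subset_sUnion_of_mem (S := 𝒯) ⟨hC'S, hC' hx𝒯, hC'conn⟩).antisymm hC'

end TopGraph

theorem statement13_general {F G H : Type*}
    [TopologicalSpace F] [TopologicalSpace G] [TopologicalSpace H]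
    (EF : F → F → Prop) (EG : G → G → Prop) (EH : H → H → Prop)
    (f : F → G) (g : G → H)
    (hf : IsTopEpi EF EG f) (hg : IsTopEpi EG EH g)
    (hcomp : TConfluent EF EH (g ∘ f)) :
    TConfluent EG EH g := by
  intro Q hQ hQconn C hC
  obtain rfl | hQne := Q.eq_empty_or_nonempty
  · simpa using hC.1
  obtain ⟨x, hxC⟩ := hC.nonempty (hQne.preimage hg.2.2.1)
  obtain ⟨a, rfl⟩ := hf.2.2.1 x
  obtain ⟨D, hD, haD⟩ := exists_tIsComponent_mem EF (show a ∈ (g ∘ f) ⁻¹' Q from hC.1 hxC)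
  have hfDC : f '' D ⊆ C :=
    hC.subset_of_tConnSet (hD.2.1.image hf.1 hf.2.1) (image_subset_iff.2 hD.1)
      hxC (mem_image_of_mem f haD)
  refine (image_subset_iff.2 hC.1).antisymm ?_
  rw [← hcomp Q hQ hQconn D hD, image_comp]
  exact image_mono hfDC

/-- If the composition `g ∘ f` of epimorphisms of topological graphs is confluent,
then `g` is confluent. -/
theorem statement13 {F G H : Type*}
    [TopologicalSpace F] [TopologicalSpace G] [TopologicalSpace H]
    [CompactSpace F] [CompactSpace G] [CompactSpace H]
    [TopologicalSpace.MetrizableSpace F] [TopologicalSpace.MetrizableSpace G]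
    [TopologicalSpace.MetrizableSpace H]
    [TotallyDisconnectedSpace F] [TotallyDisconnectedSpace G]
    [TotallyDisconnectedSpace H]
    (EF : F → F → Prop) (EG : G → G → Prop) (EH : H → H → Prop)
    (hF : IsTopGraph EF) (hG : IsTopGraph EG) (hH : IsTopGraph EH)
    (f : F → G) (g : G → H)
    (hf : IsTopEpi EF EG f) (hg : IsTopEpi EG EH g)
    (hcomp : TConfluent EF EH (g ∘ f)) :
    TConfluent EG EH g :=
  statement13_general EF EG EH f g hf hg hcomp
end
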